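/- arXiv:2306.08757 — 2 statements merged into one kernel-verified Lean document; each statement's English description precedes it below -/
import Mathlib

section
/- For i.i.d. standard Gumbel random variables g_1, ..., g_k and positive weights pi_1, ..., pi_k summing to 1, the probability that argmax_i (log pi_i + g_i) = j equals pi_j (the Gumbel-max trick). -/
/-!
Write `F t = exp (-exp (-t))` for the Gumbel CDF. Given `g j = t`, the event asks
`g i < t - log (π i / π j)` for every `i ≠ j`; by independence and `F (t - log c) = F t ^ c`,
this has probability `∏ i ≠ j, F t ^ (π i / π j) = F t ^ ((1 - π j) / π j)`.
Since `F (g j)` is uniform on `(0, 1]`, averaging over `t` gives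
`∫₀¹ u ^ ((1 - π j) / π j) du = π j`.
-/

open MeasureTheory ProbabilityTheory Finset Real

noncomputable def gumbelCDF (x : ℝ) : ℝ := exp (-exp (-x))

lemma gumbelCDF_pos (x : ℝ) : 0 < gumbelCDF x := exp_pos _

lemma gumbelCDF_lt_one (x : ℝ) : gumbelCDF x < 1 :=
  exp_lt_one_iff.mpr (neg_neg_of_pos (exp_pos _))

lemma strictMono_gumbelCDF : StrictMono gumbelCDF := fun x y hxy => by
  unfold gumbelCDF
  gcongr

lemma continuous_gumbelCDF : Continuous gumbelCDF := by
  unfold gumbelCDF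
  fun_prop

lemma gumbelCDF_le_iff {u : ℝ} (hu₀ : 0 < u) (hu₁ : u < 1) (x : ℝ) :
    gumbelCDF x ≤ u ↔ x ≤ -log (-log u) := by
  have hlog : 0 < -log u := neg_pos.mpr (log_neg hu₀ hu₁)
  rw [gumbelCDF, ← le_log_iff_exp_le hu₀, neg_le, ← log_le_iff_le_exp hlog, le_neg]

lemma gumbelCDF_sub_log {c : ℝ} (hc : 0 < c) (x : ℝ) :
    gumbelCDF (x - log c) = gumbelCDF x ^ c := by
  rw [gumbelCDF, gumbelCDF, ← exp_mul]
  congr 1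
  rw [neg_sub, exp_sub, exp_log hc, exp_neg]
  ring

section GumbelLaw

variable {ν : Measure ℝ} [IsProbabilityMeasure ν]

lemma map_gumbelCDF_eq_restrict_Ioc (hν : ∀ x, ν (Set.Iic x) = .ofReal (gumbelCDF x)) :
    ν.map gumbelCDF = volume.restrict (Set.Ioc 0 1) := by
  refine Measure.ext_of_Iic _ _ fun u => ?_
  rw [Measure.map_apply continuous_gumbelCDF.measurable measurableSet_Iic,
    Measure.restrict_apply measurableSet_Iic]
  rcases le_or_gt 1 u with hu₁ | hu₁
  · have h : gumbelCDF ⁻¹' Set.Iic u = Set.univ :=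
      Set.eq_univ_of_forall fun x => (gumbelCDF_lt_one x).le.trans hu₁
    have h' : Set.Iic u ∩ Set.Ioc 0 1 = Set.Ioc 0 1 :=
      Set.inter_eq_right.mpr fun x (hx : x ∈ Set.Ioc 0 1) => hx.2.trans hu₁
    simp [h, h']
  rw [Set.Iic_inter_Ioc_of_le hu₁.le, volume_Ioc, sub_zero]
  rcases le_or_gt u 0 with hu₀ | hu₀
  · have h : gumbelCDF ⁻¹' Set.Iic u = ∅ :=
      Set.eq_empty_of_forall_notMem fun x hx => (hu₀.trans_lt (gumbelCDF_pos x)).not_ge hx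
    simp [h, ENNReal.ofReal_of_nonpos hu₀]
  have h : gumbelCDF ⁻¹' Set.Iic u = Set.Iic (-log (-log u)) :=
    Set.ext (gumbelCDF_le_iff hu₀ hu₁)
  rw [h, hν, gumbelCDF, neg_neg, exp_log (neg_pos.mpr (log_neg hu₀ hu₁)), neg_neg,
    exp_log hu₀]

lemma measure_Iio_eq_gumbelCDF (hν : ∀ x, ν (Set.Iic x) = .ofReal (gumbelCDF x)) (x : ℝ) :
    ν (Set.Iio x) = .ofReal (gumbelCDF x) := by
  have hx : ν {x} = 0 := by
    rw [← Set.preimage_image_eq {x} strictMono_gumbelCDF.injective, Set.image_singleton,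
      ← Measure.map_apply continuous_gumbelCDF.measurable (measurableSet_singleton _),
      map_gumbelCDF_eq_restrict_Ioc hν, measure_singleton]
  rw [measure_congr (Iio_ae_eq_Iic' hx), hν]

lemma lintegral_gumbelCDF_rpow (hν : ∀ x, ν (Set.Iic x) = .ofReal (gumbelCDF x)) {a : ℝ}
    (ha : -1 < a) : ∫⁻ x, .ofReal (gumbelCDF x ^ a) ∂ν = .ofReal (1 / (a + 1)) := by
  have hmeas : Measurable fun u : ℝ => ENNReal.ofReal (u ^ a) := by fun_prop
  rw [← lintegral_map hmeas continuous_gumbelCDF.measurable, map_gumbelCDF_eq_restrict_Ioc hν,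
    ← ofReal_integral_eq_lintegral_ofReal (intervalIntegral.intervalIntegrable_rpow' ha).1
      (ae_restrict_of_forall_mem measurableSet_Ioc fun u hu => rpow_nonneg hu.1.le a),
    ← intervalIntegral.integral_of_le zero_le_one, integral_rpow (.inl ha), one_rpow,
    zero_rpow (by linarith), sub_zero]

end GumbelLaw

lemma measure_pi_setOf_forall_add_lt_add {n : ℕ} (ν : Fin (n + 1) → Measure ℝ)
    [∀ i, SigmaFinite (ν i)] (c : Fin (n + 1) → ℝ) (j : Fin (n + 1)) :
    Measure.pi ν {x | ∀ i, i ≠ j → c i + x i < c j + x j} =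
      ∫⁻ t, ∏ m, ν (j.succAbove m) (Set.Iio (c j + t - c (j.succAbove m))) ∂ν j := by
  set T : Set (ℝ × (Fin n → ℝ)) := {p | ∀ m, p.2 m < c j + p.1 - c (j.succAbove m)}
  have hT : MeasurableSet T := by
    simp only [T, Set.ofPred_forall]
    exact .iInter fun m => measurableSet_lt (by fun_prop) (by fun_prop)
  have hpre : MeasurableEquiv.piFinSuccAbove (fun _ => ℝ) j ⁻¹' T =
      {x | ∀ i, i ≠ j → c i + x i < c j + x j} := by
    ext x
    have hx : MeasurableEquiv.piFinSuccAbove (fun _ => ℝ) j x =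
        (x j, fun m => x (j.succAbove m)) := rfl
    rw [Set.mem_preimage, hx, Set.mem_ofPred_eq, Set.mem_ofPred_eq, Fin.forall_iff_succAbove j]
    simp [Fin.succAbove_ne, lt_sub_iff_add_lt']
  have hsection (t : ℝ) :
      Prod.mk t ⁻¹' T = Set.univ.pi fun m => Set.Iio (c j + t - c (j.succAbove m)) := by
    ext y
    simp [T]
  rw [← hpre, (measurePreserving_piFinSuccAbove ν j).measure_preimage hT.nullMeasurableSet,
    Measure.prod_apply hT]
  simp only [hsection, Measure.pi_pi]

lemma measure_forall_add_lt_add_of_iIndepFun {Ω : Type*} [MeasurableSpace Ω] {μ : Measure Ω}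
    [IsProbabilityMeasure μ] {n : ℕ} {g : Fin (n + 1) → Ω → ℝ}
    (hmeas : ∀ i, Measurable (g i)) (hindep : iIndepFun g μ) (c : Fin (n + 1) → ℝ)
    (j : Fin (n + 1)) :
    μ {ω | ∀ i, i ≠ j → c i + g i ω < c j + g j ω} =
      ∫⁻ t, ∏ m, μ.map (g (j.succAbove m)) (Set.Iio (c j + t - c (j.succAbove m)))
        ∂μ.map (g j) := by
  have hS : MeasurableSet {x : Fin (n + 1) → ℝ | ∀ i, i ≠ j → c i + x i < c j + x j} := by
    simp only [Set.ofPred_forall]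
    exact .iInter fun i => .iInter fun _ => measurableSet_lt (by fun_prop) (by fun_prop)
  rw [← measure_pi_setOf_forall_add_lt_add (fun i => μ.map (g i)),
    ← hindep.map_fun_eq_pi_map fun i => (hmeas i).aemeasurable,
    Measure.map_apply (by fun_prop) hS]
  rfl

/-- The Gumbel-max trick: for i.i.d. standard Gumbel random variables `g_1,...,g_k`
(CDF `x ↦ exp(-exp(-x))`) and a positive probability vector `π`, the probability that
`log π_j + g_j` strictly exceeds `log π_i + g_i` for all `i ≠ j` equals `π_j`. -/
theorem gumbel_max_trick
    {Ω : Type*} [MeasurableSpace Ω] (μ : Measure Ω) [IsProbabilityMeasure μ]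
    {k : ℕ} (g : Fin k → Ω → ℝ)
    (hmeas : ∀ i, Measurable (g i))
    (hindep : iIndepFun g μ)
    (hcdf : ∀ i (x : ℝ),
      μ {ω | g i ω ≤ x} = ENNReal.ofReal (Real.exp (-Real.exp (-x))))
    (pi : Fin k → ℝ) (hpi : ∀ i, 0 < pi i) (hpi_sum : ∑ i, pi i = 1)
    (j : Fin k) :
    μ {ω | ∀ i, i ≠ j → Real.log (pi i) + g i ω < Real.log (pi j) + g j ω}
      = ENNReal.ofReal (pi j) := by
  obtain ⟨n, rfl⟩ : ∃ n, k = n + 1 :=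
    Nat.exists_eq_succ_of_ne_zero fun hk => by subst hk; simp at hpi_sum
  have hlaw : ∀ i x, μ.map (g i) (Set.Iic x) = .ofReal (gumbelCDF x) := fun i x => by
    rw [Measure.map_apply (hmeas i) measurableSet_Iic]
    exact hcdf i x
  have (i : Fin (n + 1)) : IsProbabilityMeasure (μ.map (g i)) :=
    Measure.isProbabilityMeasure_map (hmeas i).aemeasurable
  have hrest : ∑ m, pi (j.succAbove m) / pi j = (1 - pi j) / pi j := by
    rw [← Finset.sum_div, ← hpi_sum, Fin.sum_univ_succAbove pi j, add_sub_cancel_left]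
  have hsection (t : ℝ) (m : Fin n) :
      μ.map (g (j.succAbove m)) (Set.Iio (log (pi j) + t - log (pi (j.succAbove m)))) =
        .ofReal (gumbelCDF t ^ (pi (j.succAbove m) / pi j)) := by
    rw [← gumbelCDF_sub_log (div_pos (hpi _) (hpi j)), ← measure_Iio_eq_gumbelCDF (hlaw _),
      log_div (hpi _).ne' (hpi j).ne']
    congr 2
    ring
  refine (measure_forall_add_lt_add_of_iIndepFun hmeas hindep (fun i => log (pi i)) j).trans ?_
  calc _ = ∫⁻ t, .ofReal (gumbelCDF t ^ ((1 - pi j) / pi j)) ∂μ.map (g j) := by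
        refine lintegral_congr fun t => ?_
        rw [← hrest, rpow_sum_of_pos (gumbelCDF_pos t),
          ENNReal.ofReal_prod_of_nonneg fun m _ => rpow_nonneg (gumbelCDF_pos t).le _]
        exact Finset.prod_congr rfl fun m _ => hsection t m
    _ = .ofReal (1 / ((1 - pi j) / pi j + 1)) :=
        lintegral_gumbelCDF_rpow (hlaw j) (by rw [lt_div_iff₀ (hpi j)]; linarith)
    _ = .ofReal (pi j) := by rw [div_add_one (hpi j).ne', sub_add_cancel, one_div_one_div]
end

section
/- For a joint pmf q(x,z) on finite sets with X having n elements of equal probability 1/N each grouped into N blocks B_1,...,B_N, if the conditional q(z|x) equals N*p(z)*1[z in A_i] for x in B_i, where {A_i} partitions the support of p with p(A_i) = 1/N for each i, then the marginal of z equals p(z) and the mutual information I(X;Z) equals log N. -/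
/-!
Each `x` spreads its mass `q(x)` over the block `A_i` matching its own block `B_i`, in
proportion to `p`; so the row marginal of the joint `q(x) q(z|x)` is `q(x)` and its column
marginal is `p(z)`. Wherever the joint is nonzero it equals `N q(x) p(z)`, hence every
log-ratio in `I(X;Z)` equals `log N`.
-/

open Finset Real

theorem mul_log_mul_div_self (c t : ℝ) : c * t * log (c * t / t) = c * t * log c := by
  rcases eq_or_ne t 0 with rfl | ht
  · simp
  · rw [mul_div_cancel_right₀ _ ht]

section BlockKernel

variable {X Z ι : Type*} [DecidableEq ι]

/-- The conditional `q(z|x)` of the construction, with `c = N`. -/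
noncomputable def blockKernel (c : ℝ) (A : Z → ι) (B : X → ι) (p : Z → ℝ) (x : X) (z : Z) :
    ℝ :=
  if A z = B x then c * p z else 0

noncomputable def mutualInfo [Fintype X] [Fintype Z] (J : X → Z → ℝ) : ℝ :=
  ∑ x, ∑ z, J x z * log (J x z / ((∑ z', J x z') * (∑ x', J x' z)))

variable {c : ℝ} {A : Z → ι} {B : X → ι} {p : Z → ℝ} {q0 : X → ℝ}

theorem sum_blockKernel_right [Fintype Z] (hc : c ≠ 0)
    (hA : ∀ i, ∑ z ∈ univ.filter (fun z => A z = i), p z = 1 / c) (x : X) :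
    ∑ z, blockKernel c A B p x z = 1 := by
  simp only [blockKernel]
  rw [← sum_filter, ← mul_sum, hA, mul_one_div_cancel hc]

theorem sum_mul_blockKernel_left [Fintype X] (hc : c ≠ 0)
    (hB : ∀ i, ∑ x ∈ univ.filter (fun x => B x = i), q0 x = 1 / c) (z : Z) :
    ∑ x, q0 x * blockKernel c A B p x z = p z := by
  simp only [blockKernel, mul_ite, mul_zero, eq_comm (a := A z)]
  rw [← sum_filter, ← sum_mul, hB, ← mul_assoc, one_div_mul_cancel hc, one_mul]

theorem mul_blockKernel_mul_log (x : X) (z : Z) :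
    q0 x * blockKernel c A B p x z * log (q0 x * blockKernel c A B p x z / (q0 x * p z)) =
      q0 x * blockKernel c A B p x z * log c := by
  unfold blockKernel
  split_ifs
  · rw [mul_left_comm]
    exact mul_log_mul_div_self c (q0 x * p z)
  · simp

theorem mutualInfo_mul_blockKernel [Fintype X] [Fintype Z] (hc : c ≠ 0)
    (hA : ∀ i, ∑ z ∈ univ.filter (fun z => A z = i), p z = 1 / c)
    (hB : ∀ i, ∑ x ∈ univ.filter (fun x => B x = i), q0 x = 1 / c) (hq0 : ∑ x, q0 x = 1) :
    mutualInfo (fun x z => q0 x * blockKernel c A B p x z) = log c := by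
  have hrow (x : X) : ∑ z, q0 x * blockKernel c A B p x z = q0 x := by
    rw [← mul_sum, sum_blockKernel_right hc hA, mul_one]
  calc mutualInfo (fun x z => q0 x * blockKernel c A B p x z)
      = ∑ x, ∑ z, q0 x * blockKernel c A B p x z * log c := by
        simp only [mutualInfo, hrow, sum_mul_blockKernel_left hc hB, mul_blockKernel_mul_log]
    _ = (∑ x, q0 x) * log c := by simp only [← sum_mul, hrow]
    _ = log c := by rw [hq0, one_mul]

end BlockKernel

theorem prop52_construction_marginal_and_mutualInfo_general
    {X Z : Type*} [Fintype X] [Fintype Z]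
    (N : ℕ) (hN : 0 < N)
    (p : Z → ℝ)
    (A : Z → Fin N) (hA : ∀ i, ∑ z ∈ Finset.univ.filter (fun z => A z = i), p z = 1 / N)
    (q0 : X → ℝ) (hq0_sum : ∑ x, q0 x = 1)
    (B : X → Fin N) (hB : ∀ i, ∑ x ∈ Finset.univ.filter (fun x => B x = i), q0 x = 1 / N)
    (qc : X → Z → ℝ)
    (hqc : ∀ x z, qc x z = if A z = B x then (N : ℝ) * p z else 0) :
    (∀ z, ∑ x, q0 x * qc x z = p z)
    ∧ (∑ x, ∑ z, (q0 x * qc x z) *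
          Real.log ((q0 x * qc x z) /
            ((∑ z', q0 x * qc x z') * (∑ x', q0 x' * qc x' z))))
        = Real.log N := by
  have hN' : (N : ℝ) ≠ 0 := Nat.cast_ne_zero.mpr hN.ne'
  obtain rfl : qc = blockKernel N A B p := funext fun x => funext (hqc x)
  exact ⟨sum_mul_blockKernel_left hN' hB, mutualInfo_mul_blockKernel hN' hA hB hq0_sum⟩

/-- The construction in the proof of Proposition 5.2: partition the support of `p` into
`N` blocks `A_1,...,A_N` of `p`-probability `1/N` each, partition `X` into `N` blocks
`B_1,...,B_N` of `q`-probability `1/N` each, and set `q(z|x) = N·p(z)·1[z ∈ A_{i}]`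
for `x ∈ B_i`. Then the marginal of `z` under the joint `q(x)q(z|x)` equals `p(z)`, and
the mutual information `I(X;Z)` equals `log N`. -/
theorem prop52_construction_marginal_and_mutualInfo
    {X Z : Type*} [Fintype X] [Fintype Z]
    (N : ℕ) (hN : 0 < N)
    (p : Z → ℝ) (hp_nonneg : ∀ z, 0 ≤ p z) (hp_sum : ∑ z, p z = 1)
    (A : Z → Fin N) (hA : ∀ i, ∑ z ∈ Finset.univ.filter (fun z => A z = i), p z = 1 / N)
    (q0 : X → ℝ) (hq0_nonneg : ∀ x, 0 ≤ q0 x) (hq0_sum : ∑ x, q0 x = 1)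
    (B : X → Fin N) (hB : ∀ i, ∑ x ∈ Finset.univ.filter (fun x => B x = i), q0 x = 1 / N)
    (qc : X → Z → ℝ)
    (hqc : ∀ x z, qc x z = if A z = B x then (N : ℝ) * p z else 0) :
    (∀ z, ∑ x, q0 x * qc x z = p z)
    ∧ (∑ x, ∑ z, (q0 x * qc x z) *
          Real.log ((q0 x * qc x z) /
            ((∑ z', q0 x * qc x z') * (∑ x', q0 x' * qc x' z))))
        = Real.log N :=
  prop52_construction_marginal_and_mutualInfo_general N hN p A hA q0 hq0_sum B hB qc hqc
end
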